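/- arXiv:1209.4719 — 4 statements merged into one kernel-verified Lean document; each statement's English description precedes it below -/
import Mathlib

section
/- Suppose φ₁ : ℝ → ℝ satisfies t - φ₁(t) = (1 + o(1))·(1-c)·t/ln t as t → ∞, for a constant c with 0 < c < 1. Then for every fixed n ∈ ℕ, the iterates satisfy t - φ₁^(n+1)(t) ~ (1-c)(n+1)·t/ln t as t → ∞, where φ₁^(n+1) denotes the (n+1)-st iterate. -/
open Filter Topology Real

/-!
Write `g t = t / log t`. By induction, `(t - φ₁^[k] t) / g t → k (1 - c)`. This limit alone forces
`φ₁^[k] t / t → 1`, hence `φ₁^[k] t → ∞` and `g (φ₁^[k] t) / g t → 1`, so the next step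
`φ₁^[k] t - φ₁^[k+1] t ~ (1 - c) g (φ₁^[k] t)` contributes `(1 - c) g t` to the ratio in the limit.
-/

section

variable {ψ : ℝ → ℝ}

theorem tendsto_div_self_of_tendsto_sub_div_div_log {b : ℝ}
    (h : Tendsto (fun t => (t - ψ t) / (t / log t)) atTop (𝓝 b)) :
    Tendsto (fun t => ψ t / t) atTop (𝓝 1) := by
  have hsmall := (tendsto_const_nhds (x := (1 : ℝ))).sub (h.div_atTop tendsto_log_atTop)
  rw [sub_zero] at hsmall
  refine hsmall.congr' ?_
  filter_upwards [eventually_gt_atTop 1] with t ht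
  have hlog : log t ≠ 0 := (log_pos ht).ne'
  field_simp
  ring

theorem tendsto_atTop_of_tendsto_div_self (h : Tendsto (fun t => ψ t / t) atTop (𝓝 1)) :
    Tendsto ψ atTop atTop := by
  refine (h.pos_mul_atTop one_pos tendsto_id).congr' ?_
  filter_upwards [eventually_ne_atTop 0] with t ht
  exact div_mul_cancel₀ (ψ t) ht

theorem tendsto_log_div_log_of_tendsto_div_self (h : Tendsto (fun t => ψ t / t) atTop (𝓝 1)) :
    Tendsto (fun t => log (ψ t) / log t) atTop (𝓝 1) := by
  have hlog_ratio : Tendsto (fun t => log (ψ t / t)) atTop (𝓝 0) :=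
    log_one ▸ (continuousAt_log one_ne_zero).tendsto.comp h
  have hsum := (hlog_ratio.div_atTop tendsto_log_atTop).const_add 1
  rw [add_zero] at hsum
  refine hsum.congr' ?_
  filter_upwards [eventually_gt_atTop 1, (tendsto_atTop_of_tendsto_div_self h).eventually_gt_atTop 0]
    with t ht hψ
  have hlog : log t ≠ 0 := (log_pos ht).ne'
  rw [log_div hψ.ne' (by positivity)]
  field_simp
  ring

theorem tendsto_div_log_comp_div_div_log (h : Tendsto (fun t => ψ t / t) atTop (𝓝 1)) :
    Tendsto (fun t => (ψ t / log (ψ t)) / (t / log t)) atTop (𝓝 1) := by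
  refine (div_one (1 : ℝ) ▸ h.div (tendsto_log_div_log_of_tendsto_div_self h) one_ne_zero).congr
    fun t => ?_
  exact div_div_div_comm _ _ _ _

theorem tendsto_sub_comp_div_div_log {φ : ℝ → ℝ} {a b : ℝ}
    (hφ : Tendsto (fun t => (t - φ t) / (t / log t)) atTop (𝓝 a))
    (hψ : Tendsto (fun t => (t - ψ t) / (t / log t)) atTop (𝓝 b)) :
    Tendsto (fun t => (t - φ (ψ t)) / (t / log t)) atTop (𝓝 (b + a)) := by
  have hratio := tendsto_div_self_of_tendsto_sub_div_div_log hψ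
  have hψ_top := tendsto_atTop_of_tendsto_div_self hratio
  have hsum := hψ.add ((hφ.comp hψ_top).mul (tendsto_div_log_comp_div_div_log hratio))
  rw [mul_one] at hsum
  refine hsum.congr' ?_
  filter_upwards [hψ_top.eventually_gt_atTop 1] with t hψt
  have hscale : ψ t / log (ψ t) ≠ 0 := by have := log_pos hψt; positivity
  simp only [Function.comp_apply, div_mul_div_cancel₀ hscale, ← add_div]
  ring

end

theorem tendsto_sub_iterate_div_div_log {φ : ℝ → ℝ} {a : ℝ}
    (hφ : Tendsto (fun t => (t - φ t) / (t / log t)) atTop (𝓝 a)) (k : ℕ) :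
    Tendsto (fun t => (t - φ^[k] t) / (t / log t)) atTop (𝓝 (k * a)) := by
  induction k with
  | zero => simp
  | succ k ih =>
    simp only [Function.iterate_succ_apply', Nat.cast_succ, add_one_mul]
    exact tendsto_sub_comp_div_div_log hφ ih

theorem iterate_asymptotic_general
    (φ₁ : ℝ → ℝ) (c : ℝ) (hc1 : c < 1) (n : ℕ)
    (hasymp : Tendsto (fun t => (t - φ₁ t) / ((1 - c) * t / Real.log t))
      atTop (nhds 1)) :
    Tendsto (fun t => (t - φ₁^[n + 1] t) / ((1 - c) * (n + 1) * t / Real.log t))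
      atTop (nhds 1) := by
  have hc : 1 - c ≠ 0 := (sub_pos.2 hc1).ne'
  have hφ : Tendsto (fun t => (t - φ₁ t) / (t / log t)) atTop (𝓝 (1 - c)) := by
    refine (one_mul (1 - c) ▸ hasymp.mul_const (1 - c)).congr fun t => ?_
    rw [mul_div_assoc, div_mul_eq_mul_div, mul_comm _ (1 - c), mul_div_mul_left _ _ hc]
  have hK : ((n + 1 : ℕ) : ℝ) * (1 - c) / ((1 - c) * (n + 1)) = 1 := by
    push_cast
    field_simp
  refine (hK ▸ (tendsto_sub_iterate_div_div_log hφ (n + 1)).div_const _).congr fun t => ?_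
  rw [div_div, mul_div_assoc _ t, mul_comm (t / log t)]

/-- if `t - φ₁ t ~ (1-c) t / ln t`, then the `(n+1)`-st iterate
satisfies `t - φ₁^[n+1] t ~ (1-c)(n+1) t / ln t`. -/
theorem iterate_asymptotic
    (φ₁ : ℝ → ℝ) (c : ℝ) (hc : 0 < c) (hc1 : c < 1) (n : ℕ)
    (hincr : ∀ᶠ t in atTop, ∀ s, t ≤ s → φ₁ t ≤ φ₁ s)
    (hlt : ∀ᶠ t in atTop, φ₁ t < t)
    (hiter : ∀ k : ℕ, Tendsto (fun t => φ₁^[k] t) atTop atTop)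
    (hasymp : Tendsto (fun t => (t - φ₁ t) / ((1 - c) * t / Real.log t))
      atTop (nhds 1)) :
    Tendsto (fun t => (t - φ₁^[n + 1] t) / ((1 - c) * (n + 1) * t / Real.log t))
      atTop (nhds 1) :=
  iterate_asymptotic_general φ₁ c hc1 n hasymp
end

section
/- Suppose φ₁ satisfies t - φ₁(t) ~ (1-c)·t/ln t as t → ∞ with 0 < c < 1, and fix n ∈ ℕ and ε > 0. Then for all sufficiently large T, φ₁^(n+1)(T) > (1 - ε)·T. -/
/-!
Since `(1 - c) t / log t = o(t)`, the hypothesis gives `t - φ₁ t = o(t)`, i.e. `φ₁ ~ id`.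
Because every iterate tends to infinity, `φ₁ ∘ φ₁^[k] ~ φ₁^[k]`, so by induction every
iterate is equivalent to `id`, and `φ₁^[n+1] T / T → 1`.
-/

open Filter Asymptotics

namespace Asymptotics

section

variable {E : Type*} [NormedAddCommGroup E] {l : Filter E} {f : E → E}

theorem isEquivalent_id_of_sub_isEquivalent {g : E → E}
    (h : (fun t => t - f t) ~[l] g) (hg : g =o[l] id) : f ~[l] id := by
  have hsub : (fun t => t - f t) =o[l] id := h.trans_isLittleO hg
  simpa [IsEquivalent, Pi.sub_def] using hsub.neg_left

theorem IsEquivalent.iterate_id (hf : f ~[l] id)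
    (hiter : ∀ k : ℕ, Tendsto f^[k] l l) (k : ℕ) : f^[k] ~[l] id := by
  induction k with
  | zero => exact IsEquivalent.refl
  | succ k ih =>
    rw [Function.iterate_succ']
    exact (hf.comp_tendsto (hiter k)).trans ih

end

theorem isLittleO_const_mul_div_log_id (a : ℝ) :
    (fun t => a * t / Real.log t) =o[atTop] id := by
  refine (isLittleO_iff_tendsto' (g := fun t => t)
    ((eventually_ne_atTop 0).mono fun t ht h => absurd h ht)).mpr ?_
  refine ((tendsto_const_nhds (x := a)).div_atTop Real.tendsto_log_atTop).congr' ?_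
  filter_upwards [eventually_ne_atTop 0] with t ht
  field_simp

theorem IsEquivalent.eventually_mul_lt_of_id {u : ℝ → ℝ} (hu : u ~[atTop] id) {a : ℝ}
    (ha : a < 1) : ∀ᶠ t in atTop, a * t < u t := by
  have hdiv : Tendsto (fun t => u t / t) atTop (nhds 1) :=
    (isEquivalent_iff_tendsto_one (eventually_ne_atTop 0)).mp hu
  filter_upwards [hdiv.eventually (eventually_gt_nhds ha), eventually_gt_atTop 0] with t ht ht0
  exact (lt_div_iff₀ ht0).mp ht

end Asymptotics

theorem iterate_lower_bound_general
    (φ₁ : ℝ → ℝ) (c : ℝ) (n : ℕ) (ε : ℝ) (hε : 0 < ε)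
    (hiter : ∀ k : ℕ, Tendsto (fun t => φ₁^[k] t) atTop atTop)
    (hasymp : Tendsto (fun t => (t - φ₁ t) / ((1 - c) * t / Real.log t))
      atTop (nhds 1)) :
    ∀ᶠ T in atTop, (1 - ε) * T < φ₁^[n + 1] T := by
  have hφ : φ₁ ~[atTop] id :=
    isEquivalent_id_of_sub_isEquivalent (isEquivalent_of_tendsto_one hasymp)
      (isLittleO_const_mul_div_log_id (1 - c))
  exact (hφ.iterate_id hiter (n + 1)).eventually_mul_lt_of_id (by linarith)

/-- if `t - φ₁ t ~ (1-c) t / ln t` then for every fixed `n` and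
`ε > 0`, eventually `φ₁^[n+1] T > (1 - ε) T`. -/
theorem iterate_lower_bound
    (φ₁ : ℝ → ℝ) (c : ℝ) (hc : 0 < c) (hc1 : c < 1) (n : ℕ) (ε : ℝ) (hε : 0 < ε)
    (hincr : ∀ᶠ t in atTop, ∀ s, t ≤ s → φ₁ t ≤ φ₁ s)
    (hlt : ∀ᶠ t in atTop, φ₁ t < t)
    (hiter : ∀ k : ℕ, Tendsto (fun t => φ₁^[k] t) atTop atTop)
    (hasymp : Tendsto (fun t => (t - φ₁ t) / ((1 - c) * t / Real.log t))
      atTop (nhds 1)) :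
    ∀ᶠ T in atTop, (1 - ε) * T < φ₁^[n + 1] T :=
  iterate_lower_bound_general φ₁ c n ε hε hiter hasymp
end

section
/- Under the hypotheses t - φ₁(t) ~ (1-c)·t/ln t with c ≤ 0.58, φ₁ increasing, fix n ∈ ℕ. For all sufficiently large T and 0 < U ≤ T/(ln T)², the gaps between consecutive iterated intervals satisfy φ₁^k(T) - φ₁^(k+1)(T+U) > 0.18·T/ln T for every k = 0, 1, ..., n. In particular, the sets [φ₁^k(T), φ₁^k(T+U)], k = 0, ..., n+1, are pairwise disjoint. -/
open Filter

lemma div_log_mono' {s t : ℝ} (hs : Real.exp 1 ≤ s) (hst : s ≤ t) :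
    s / Real.log s ≤ t / Real.log t := by
  have h1 : (1:ℝ) < s := lt_of_lt_of_le (by nlinarith [Real.exp_one_gt_d9]) hs
  have h1t : (1:ℝ) < t := lt_of_lt_of_le h1 hst
  have hls : 0 < Real.log s := Real.log_pos h1
  have hlt : 0 < Real.log t := Real.log_pos h1t
  have h := Real.log_div_self_antitoneOn (Set.mem_setOf_eq ▸ hs)
    (Set.mem_setOf_eq ▸ (hs.trans hst)) hst
  rw [div_le_div_iff₀ hls hlt]
  rw [div_le_div_iff₀ (by linarith : (0:ℝ) < t) (by linarith : (0:ℝ) < s)] at h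
  nlinarith

set_option maxHeartbeats 1000000 in
/-- under the uniform asymptotic `t - φ₁ t ~ (1-c) t / ln t`
with `0 < c ≤ 0.58`, for all large `T` and `0 < U ≤ T/(ln T)²` the gaps
satisfy `φ₁^[k] T - φ₁^[k+1] (T+U) > 0.18 · T / ln T` for `k = 0, ..., n`;
in particular the intervals `[φ₁^[k] T, φ₁^[k] (T+U)]`, `k = 0, ..., n+1`,
are pairwise disjoint. -/
theorem iterate_gap_bound
    (φ₁ : ℝ → ℝ) (T₀ c : ℝ) (hc : 0 < c) (hc58 : c ≤ 0.58) (n : ℕ)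
    (hincr : ∀ s t : ℝ, T₀ ≤ s → s ≤ t → φ₁ s ≤ φ₁ t)
    (hlt : ∀ t : ℝ, T₀ ≤ t → φ₁ t < t)
    (hiter : ∀ k : ℕ, Tendsto (fun t => φ₁^[k] t) atTop atTop)
    (hasymp : ∀ δ : ℝ, 0 < δ → ∃ T₁ : ℝ, ∀ t : ℝ, T₁ ≤ t →
      |t - φ₁ t - (1 - c) * t / Real.log t| < δ * t / Real.log t) :
    ∃ T₂ : ℝ, ∀ T : ℝ, T₂ ≤ T → ∀ U : ℝ, 0 < U → U ≤ T / (Real.log T) ^ 2 →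
      (∀ k : ℕ, k ≤ n →
        0.18 * (T / Real.log T) < φ₁^[k] T - φ₁^[k + 1] (T + U)) ∧
      (∀ k j : ℕ, k ≤ n + 1 → j ≤ n + 1 → k ≠ j →
        Disjoint (Set.Icc (φ₁^[k] T) (φ₁^[k] (T + U)))
          (Set.Icc (φ₁^[j] T) (φ₁^[j] (T + U)))) := by
  obtain ⟨N, hNdef⟩ : ∃ N : ℝ, N = (n : ℝ) := ⟨_, rfl⟩
  have hN0 : 0 ≤ N := hNdef ▸ Nat.cast_nonneg n
  obtain ⟨δ, hδ, hδinv⟩ : ∃ d : ℝ, 0 < d ∧ d * (100 * (N + 2)) = 1 :=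
    ⟨1 / (100 * (N + 2)), by positivity, by field_simp⟩
  have hδN : 0 ≤ δ * N := mul_nonneg hδ.le hN0
  have hδ200 : δ ≤ 1 / 200 := by linarith only [hδinv, hδN]
  obtain ⟨T₁, hT₁⟩ := hasymp δ hδ
  obtain ⟨M, hMT₀, hMT₁, hMe⟩ : ∃ M : ℝ, T₀ ≤ M ∧ T₁ ≤ M ∧ Real.exp 1 ≤ M :=
    ⟨max (max T₀ T₁) (Real.exp 1),
      le_trans (le_max_left _ _) (le_max_left _ _),
      le_trans (le_max_right _ _) (le_max_left _ _), le_max_right _ _⟩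
  have hM0 : 0 < M := lt_of_lt_of_le (Real.exp_pos 1) hMe
  refine ⟨max (2 * M + 1) (Real.exp (100 * (N + 2))), ?_⟩
  intro T hT U hU0 hUle
  have hTM : 2 * M + 1 ≤ T := le_trans (le_max_left _ _) hT
  have hT0 : 0 < T := by linarith only [hTM, hM0]
  have hlogT : 100 * (N + 2) ≤ Real.log T := by
    rw [Real.le_log_iff_exp_le hT0]; exact le_trans (le_max_right _ _) hT
  have hlogT100 : 100 ≤ Real.log T := by linarith only [hlogT, hN0]
  have hlogT0 : 0 < Real.log T := by linarith only [hlogT100]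
  obtain ⟨R, hRdef⟩ : ∃ R : ℝ, R = T / Real.log T := ⟨_, rfl⟩
  rw [show T / Real.log T = R from hRdef.symm]
  have hR0 : 0 < R := hRdef ▸ div_pos hT0 hlogT0
  have hRT : R * Real.log T = T := by rw [hRdef]; exact div_mul_cancel₀ T hlogT0.ne'
  have hδR : 0 ≤ δ * R := mul_nonneg hδ.le hR0.le
  have hRT100 : R ≤ T / 100 := by
    rw [hRdef]; exact div_le_div_of_nonneg_left hT0.le (by norm_num) hlogT100
  have hUR : U ≤ R / 100 := by
    have h1 : T / (Real.log T) ^ 2 = R / Real.log T := by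
      rw [hRdef, div_div, sq]
    have h2 : R / Real.log T ≤ R / 100 :=
      div_le_div_of_nonneg_left hR0.le (by norm_num) hlogT100
    rw [h1] at hUle; linarith only [hUle, h2]
  have hTU : T + U ≤ 1.01 * T := by linarith only [hUR, hRT100, hT0]
  have hM98 : M ≤ 0.98 * T := by linarith only [hTM, hM0]
  -- asymptotic bounds at any point ≥ M
  have hasM : ∀ x : ℝ, M ≤ x →
      (1 - c - δ) * (x / Real.log x) ≤ x - φ₁ x ∧
      x - φ₁ x ≤ (1 - c + δ) * (x / Real.log x) := by
    intro x hx
    have h := abs_lt.mp (hT₁ x (hMT₁.trans hx))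
    have e1 : (1 - c) * x / Real.log x - δ * x / Real.log x
        = (1 - c - δ) * (x / Real.log x) := by ring
    have e2 : (1 - c) * x / Real.log x + δ * x / Real.log x
        = (1 - c + δ) * (x / Real.log x) := by ring
    exact ⟨by linarith only [h.1, e1], by linarith only [h.2, e2]⟩
  -- smallness of k * (1.01 R)
  have hRsmall : ∀ k : ℕ, (k : ℝ) ≤ N + 1 → (k : ℝ) * (1.01 * R) ≤ 0.02 * T := by
    intro k hkN1
    have p1 : R * (100 * (N + 2)) ≤ R * Real.log T :=
      mul_le_mul_of_nonneg_left hlogT hR0.le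
    have p2 : (k : ℝ) * (1.01 * R) ≤ (N + 1) * (1.01 * R) :=
      mul_le_mul_of_nonneg_right hkN1 (by positivity)
    have p3 : 0 ≤ R * N := mul_nonneg hR0.le hN0
    linarith only [p1, p2, p3, hRT, hR0]
  -- main induction
  have key : ∀ k : ℕ, k ≤ n + 1 →
      T - (k : ℝ) * (1.01 * R) ≤ φ₁^[k] T ∧ φ₁^[k] T ≤ T ∧
      φ₁^[k] T ≤ φ₁^[k] (T + U) ∧
      φ₁^[k] (T + U) ≤ φ₁^[k] T + (U + 8 * δ * (k : ℝ) * R) ∧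
      φ₁^[k] (T + U) ≤ T + U := by
    intro k
    induction k with
    | zero =>
      intro _
      simp only [Function.iterate_zero_apply, Nat.cast_zero]
      refine ⟨by linarith only [hR0], le_refl T, by linarith only [hU0],
        by linarith only, le_refl _⟩
    | succ k ih =>
      intro hk
      obtain ⟨h1, h2, h3, h4, h5⟩ := ih (Nat.le_of_succ_le hk)
      set a := φ₁^[k] T with hadef
      set b := φ₁^[k] (T + U) with hbdef
      have hkN1 : (k : ℝ) ≤ N + 1 := by
        rw [hNdef]; exact_mod_cast Nat.le_of_succ_le hk
      have hksmall := hRsmall k hkN1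
      have ha98 : 0.98 * T ≤ a := by linarith only [h1, hksmall]
      have haM : M ≤ a := le_trans hM98 ha98
      have hbM : M ≤ b := le_trans haM h3
      have ha0 : 0 < a := by linarith only [ha98, hT0]
      have hae : Real.exp 1 ≤ a := hMe.trans haM
      have hbe : Real.exp 1 ≤ b := hMe.trans hbM
      have hloga0 : 0 < Real.log a :=
        Real.log_pos (by linarith only [hae, Real.exp_one_gt_d9])
      have hlogb0 : 0 < Real.log b :=
        Real.log_pos (by linarith only [hbe, Real.exp_one_gt_d9])
      have ha_div_le : a / Real.log a ≤ R := by
        have h := div_log_mono' hae h2; rw [hRdef]; exact h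
      have ha_div_pos : 0 < a / Real.log a := div_pos ha0 hloga0
      have hb_div_le : b / Real.log b ≤ 1.01 * R := by
        have e1 : b / Real.log b ≤ (T + U) / Real.log (T + U) := div_log_mono' hbe h5
        have e2 : Real.log T ≤ Real.log (T + U) :=
          Real.log_le_log hT0 (by linarith only [hU0])
        have e3 : (T + U) / Real.log (T + U) ≤ (T + U) / Real.log T :=
          div_le_div_of_nonneg_left (by linarith only [hT0, hU0]) hlogT0 e2
        have e4 : (T + U) / Real.log T ≤ 1.01 * T / Real.log T :=
          div_le_div_of_nonneg_right hTU hlogT0.le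
        have e5 : 1.01 * T / Real.log T = 1.01 * R := by rw [hRdef]; ring
        linarith only [e1, e3, e4, e5]
      obtain ⟨hAl, hAu⟩ := hasM a haM
      obtain ⟨hBl, hBu⟩ := hasM b hbM
      have hit1 : φ₁^[k + 1] T = φ₁ a := Function.iterate_succ_apply' φ₁ k T
      have hit2 : φ₁^[k + 1] (T + U) = φ₁ b := Function.iterate_succ_apply' φ₁ k (T + U)
      rw [hit1, hit2]
      have habd : a / Real.log a ≤ b / Real.log b := div_log_mono' hae h3
      refine ⟨?_, ?_, ?_, ?_, ?_⟩
      · have q : (1 - c + δ) * (a / Real.log a) ≤ 1.01 * R :=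
          mul_le_mul (by linarith only [hc, hδ200]) ha_div_le ha_div_pos.le (by norm_num)
        push_cast
        linarith only [h1, hAu, q]
      · exact le_trans (hlt a (hMT₀.trans haM)).le h2
      · exact hincr a b (hMT₀.trans haM) h3
      · have hmul : (1 - c + δ) * (a / Real.log a) ≤ (1 - c + δ) * (b / Real.log b) :=
          mul_le_mul_of_nonneg_left habd (by linarith only [hc58, hδ])
        have h2δ : 2 * δ * (b / Real.log b) ≤ 2 * δ * (1.01 * R) :=
          mul_le_mul_of_nonneg_left hb_div_le (by linarith only [hδ])
        push_cast
        linarith only [hBl, hAu, hmul, h2δ, h4, hδR]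
      · exact le_trans (hlt b (hMT₀.trans hbM)).le h5
  -- gap bound
  have h8δ : ∀ k : ℕ, k ≤ n → 8 * δ * ((k : ℝ) + 1) * R ≤ 0.08 * R := by
    intro k hkle
    have hkN : (k : ℝ) ≤ N := by rw [hNdef]; exact_mod_cast hkle
    have h1 : (k : ℝ) + 1 ≤ N + 2 := by linarith only [hkN]
    have q : δ * (100 * (N + 2)) * R = R := by rw [hδinv, one_mul]
    have p : 8 * (δ * R) * ((k : ℝ) + 1) ≤ 8 * (δ * R) * (N + 2) :=
      mul_le_mul_of_nonneg_left h1 (mul_nonneg (by norm_num) hδR)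
    linarith only [p, q, hδR]
  have gap : ∀ k : ℕ, k ≤ n → 0.31 * R ≤ φ₁^[k] T - φ₁^[k + 1] (T + U) := by
    intro k hkle
    obtain ⟨h1, h2, h3, h4, h5⟩ := key k (le_trans hkle (Nat.le_succ n))
    obtain ⟨g1, g2, g3, g4, g5⟩ := key (k + 1) (Nat.succ_le_succ hkle)
    set a := φ₁^[k] T with hadef
    have hkN1 : (k : ℝ) ≤ N + 1 := by
      rw [hNdef]
      have : (k : ℝ) ≤ (n : ℝ) := by exact_mod_cast hkle
      linarith only [this]
    have hksmall := hRsmall k hkN1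
    have ha98 : 0.98 * T ≤ a := by linarith only [h1, hksmall]
    have haM : M ≤ a := le_trans hM98 ha98
    have ha0 : 0 < a := by linarith only [ha98, hT0]
    have hloga0 : 0 < Real.log a :=
      Real.log_pos (by linarith only [hMe.trans haM, Real.exp_one_gt_d9])
    have hloga_le : Real.log a ≤ Real.log T := Real.log_le_log ha0 h2
    have ha_div_ge : 0.98 * R ≤ a / Real.log a := by
      have e1 : a / Real.log T ≤ a / Real.log a :=
        div_le_div_of_nonneg_left ha0.le hloga0 hloga_le
      have e2 : 0.98 * T / Real.log T ≤ a / Real.log T :=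
        div_le_div_of_nonneg_right ha98 hlogT0.le
      have e3 : 0.98 * T / Real.log T = 0.98 * R := by rw [hRdef]; ring
      linarith only [e1, e2, e3]
    obtain ⟨hAl, _⟩ := hasM a haM
    have hstep : 0.4 * R ≤ a - φ₁ a := by
      have q : 0.41 * (0.98 * R) ≤ (1 - c - δ) * (a / Real.log a) :=
        mul_le_mul (by linarith only [hc58, hδ200]) ha_div_ge (by positivity)
          (by linarith only [hc58, hδ200])
      linarith only [q, hAl, hR0]
    have hit1 : φ₁^[k + 1] T = φ₁ a := Function.iterate_succ_apply' φ₁ k T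
    have h8 := h8δ k hkle
    have g4' : φ₁^[k + 1] (T + U) ≤ φ₁ a + (U + 8 * δ * ((k : ℝ) + 1) * R) := by
      rw [← hit1]; push_cast at g4; linarith only [g4]
    linarith only [hstep, g4', h8, hUR]
  -- antitone chain
  have bdec : ∀ j : ℕ, j ≤ n + 1 → ∀ k : ℕ, k ≤ j →
      φ₁^[j] (T + U) ≤ φ₁^[k] (T + U) := by
    intro j
    induction j with
    | zero => intro _ k hk; interval_cases k; exact le_refl _
    | succ j ih =>
      intro hj k hk
      have hjM : M ≤ φ₁^[j] (T + U) := by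
        obtain ⟨h1, h2, h3, _, _⟩ := key j (Nat.le_of_succ_le hj)
        have hkN1 : (j : ℝ) ≤ N + 1 := by
          rw [hNdef]; exact_mod_cast Nat.le_of_succ_le hj
        have hksmall := hRsmall j hkN1
        linarith only [h1, h3, hksmall, hM98]
      have hdrop : φ₁^[j + 1] (T + U) ≤ φ₁^[j] (T + U) := by
        rw [Function.iterate_succ_apply']
        exact (hlt _ (hMT₀.trans hjM)).le
      rcases Nat.lt_or_ge k (j + 1) with h | h
      · exact le_trans hdrop (ih (Nat.le_of_succ_le hj) k (Nat.lt_succ_iff.mp h))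
      · have : k = j + 1 := le_antisymm hk h
        rw [this]
  have disj : ∀ k j : ℕ, k < j → j ≤ n + 1 →
      Disjoint (Set.Icc (φ₁^[k] T) (φ₁^[k] (T + U)))
        (Set.Icc (φ₁^[j] T) (φ₁^[j] (T + U))) := by
    intro k j hkj hj
    have hkn : k ≤ n := by omega
    have hg := gap k hkn
    have hb := bdec j hj (k + 1) hkj
    rw [Set.disjoint_left]
    intro x hx hx'
    have h1 := hx.1
    have h2 := hx'.2
    linarith only [hg, hb, h1, h2, hR0]
  refine ⟨?_, ?_⟩
  · intro k hk
    linarith only [gap k hk, hR0]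
  · intro k j hk hj hne
    rcases lt_or_gt_of_ne hne with h | h
    · exact disj k j h hj
    · exact (disj j k h hk).symm
end

section
/- Suppose φ₁ satisfies t - φ₁(t) ~ (1-c)·t/ln t with 0 < c < 1, φ₁ increasing, fix n ∈ ℕ. Suppose additionally that φ₁^k(T+U) - φ₁^k(T) ~ U as T → ∞ for each k ≤ n+1, uniformly for U in [T^(1/3+ε), T/(ln T)²]. Then for each k = 0, 1, ..., n, the gap satisfies φ₁^k(T) - φ₁^(k+1)(T+U) ~ (1-c)·T/ln T as T → ∞, for U in this range. -/
open Filter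

set_option maxHeartbeats 2000000

/-- if `t - φ₁ t ~ (1-c) t / ln t` (uniformly) and, uniformly for
`U ∈ [T^(1/3+ε), T/(ln T)²]`, `φ₁^[k](T+U) - φ₁^[k] T ~ U` for each `k ≤ n+1`,
then `φ₁^[k] T - φ₁^[k+1] (T+U) ~ (1-c) T / ln T` for each `k ≤ n`,
uniformly for `U` in this range. -/
theorem iterate_gap_asymptotic
    (φ₁ : ℝ → ℝ) (T₀ c ε : ℝ) (hc : 0 < c) (hc1 : c < 1) (hε : 0 < ε) (n : ℕ)
    (hincr : ∀ s t : ℝ, T₀ ≤ s → s ≤ t → φ₁ s ≤ φ₁ t)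
    (hlt : ∀ t : ℝ, T₀ ≤ t → φ₁ t < t)
    (hasymp : ∀ δ : ℝ, 0 < δ → ∃ T₁ : ℝ, ∀ t : ℝ, T₁ ≤ t →
      |t - φ₁ t - (1 - c) * t / Real.log t| < δ * t / Real.log t)
    (hU : ∀ δ : ℝ, 0 < δ → ∃ T₁ : ℝ, ∀ T : ℝ, T₁ ≤ T → ∀ U : ℝ,
      T ^ ((1 : ℝ) / 3 + ε) ≤ U → U ≤ T / (Real.log T) ^ 2 →
      ∀ k : ℕ, k ≤ n + 1 → |φ₁^[k] (T + U) - φ₁^[k] T - U| < δ * U) :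
    ∀ δ : ℝ, 0 < δ → ∃ T₂ : ℝ, ∀ T : ℝ, T₂ ≤ T → ∀ U : ℝ,
      T ^ ((1 : ℝ) / 3 + ε) ≤ U → U ≤ T / (Real.log T) ^ 2 →
      ∀ k : ℕ, k ≤ n →
        |φ₁^[k] T - φ₁^[k + 1] (T + U) - (1 - c) * T / Real.log T| <
          δ * (T / Real.log T) := by
  intro δ hδ
  set δ₁ : ℝ := min (δ / 5) 1 with hδ₁def
  have hδ₁pos : 0 < δ₁ := lt_min (by linarith) one_pos
  have hδ₁le1 : δ₁ ≤ 1 := min_le_right _ _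
  have hδ₁leδ : 5 * δ₁ ≤ δ := by
    have h := min_le_left (δ / 5) 1
    rw [← hδ₁def] at h; linarith
  obtain ⟨T₁a, ha⟩ := hasymp δ₁ hδ₁pos
  obtain ⟨T₁b, hb⟩ := hasymp 1 one_pos
  obtain ⟨T₁c, hUc⟩ := hU δ₁ hδ₁pos
  set C : ℝ := 8 * ((n : ℝ) + 1) + 1 with hCdef
  have hCpos : 0 < C := by positivity
  set K : ℝ := 16 * ((n : ℝ) + 2) + (2 * C + 2) / δ₁ + 1 / δ₁ + 10 with hKdef
  have hK0 : 0 ≤ (2 * C + 2) / δ₁ := by positivity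
  have hK0' : 0 ≤ 1 / δ₁ := by positivity
  have hKn : 16 * ((n : ℝ) + 2) ≤ K := by rw [hKdef]; linarith
  have hK10 : (10 : ℝ) ≤ K := by
    have : (0:ℝ) ≤ 16 * ((n : ℝ) + 2) := by positivity
    rw [hKdef]; linarith
  have hKd : (2 * C + 2) / δ₁ ≤ K := by
    have : (0:ℝ) ≤ 16 * ((n : ℝ) + 2) := by positivity
    rw [hKdef]; linarith
  have hKd' : 1 / δ₁ ≤ K := by
    have : (0:ℝ) ≤ 16 * ((n : ℝ) + 2) := by positivity
    rw [hKdef]; linarith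
  refine ⟨2 * |T₁a| + 2 * |T₁b| + |T₁c| + 2 * |T₀| + Real.exp K, ?_⟩
  intro T hT U hU1 hU2 k hk
  have habsa := abs_nonneg T₁a
  have habsb := abs_nonneg T₁b
  have habsc := abs_nonneg T₁c
  have habs0 := abs_nonneg T₀
  have hTexp : Real.exp K ≤ T := by linarith
  have hT0 : 0 < T := (Real.exp_pos K).trans_le hTexp
  have hKL : K ≤ Real.log T := (Real.le_log_iff_exp_le hT0).mpr hTexp
  set L := Real.log T with hLdef
  have hL10 : (10 : ℝ) ≤ L := hK10.trans hKL
  have hLpos : 0 < L := by linarith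
  have hL1 : (1 : ℝ) ≤ L := by linarith
  -- lower bounds on T relative to the thresholds
  have hT1a : T₁a ≤ T / 2 := by
    have := le_abs_self T₁a
    have h2 : 2 * |T₁a| ≤ T := by linarith [Real.exp_pos K]
    linarith
  have hT1b : T₁b ≤ T / 2 := by
    have := le_abs_self T₁b
    have h2 : 2 * |T₁b| ≤ T := by linarith [Real.exp_pos K]
    linarith
  have hT1c : T₁c ≤ T := by
    have := le_abs_self T₁c
    linarith [Real.exp_pos K]
  have hT00 : T₀ ≤ T / 2 := by
    have := le_abs_self T₀
    have h2 : 2 * |T₀| ≤ T := by linarith [Real.exp_pos K]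
    linarith
  have hUpos : 0 < U := lt_of_lt_of_le (Real.rpow_pos_of_pos hT0 _) hU1
  have hUTL2 : U ≤ T / L ^ 2 := hU2
  have hTL2TL : T / L ^ 2 ≤ T / L := by
    rw [div_le_div_iff₀ (by positivity) hLpos]
    have hLL2 : L ≤ L ^ 2 := by
      linarith [mul_le_mul_of_nonneg_left hL1 hLpos.le]
    linarith [mul_nonneg hT0.le (by linarith : (0:ℝ) ≤ L ^ 2 - L)]
  have hUTL : U ≤ T / L := hUTL2.trans hTL2TL
  have hTLT : T / L ≤ T := div_le_self hT0.le hL1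
  have hUleT : U ≤ T := hUTL.trans hTLT
  have htpos : 0 < T + U := by linarith
  have ht2T : T + U ≤ 2 * T := by linarith
  have hLL' : L ≤ Real.log (T + U) := Real.log_le_log hT0 (by linarith)
  set L' := Real.log (T + U) with hL'def
  have hL'pos : 0 < L' := by linarith
  have hlog2 : Real.log 2 ≤ 1 := by
    have := Real.log_two_lt_d9
    linarith
  have hlog2pos : 0 < Real.log 2 := Real.log_pos (by norm_num)
  -- key: lower and upper bounds on iterates of T + U
  have key : ∀ j : ℕ, j ≤ n + 1 →
      (T + U) - 4 * (j : ℝ) * (T + U) / L' ≤ φ₁^[j] (T + U) ∧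
      φ₁^[j] (T + U) ≤ T + U := by
    intro j hj
    induction j with
    | zero => simp
    | succ m ih =>
      obtain ⟨hml, hmu⟩ := ih (Nat.le_of_succ_le hj)
      set u := φ₁^[m] (T + U) with hudef
      have hmle : (m : ℝ) ≤ (n : ℝ) + 1 := by
        exact_mod_cast Nat.le_of_succ_le hj
      have hL'big : 16 * ((n : ℝ) + 2) ≤ L' := by linarith
      have hstep : 4 * (m : ℝ) * (T + U) / L' ≤ (T + U) / 2 := by
        rw [div_le_div_iff₀ hL'pos (by norm_num : (0:ℝ) < 2)]
        have hm8 : 8 * (m : ℝ) ≤ L' := by linarith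
        linarith [mul_nonneg (by linarith : (0:ℝ) ≤ L' - 8 * (m : ℝ)) htpos.le]
      have hu2 : (T + U) / 2 ≤ u := by linarith
      have huT2 : T / 2 ≤ u := by linarith
      have hupos : 0 < u := by linarith
      have hlogu : L' - Real.log 2 ≤ Real.log u := by
        have h1 : Real.log ((T + U) / 2) ≤ Real.log u :=
          Real.log_le_log (by linarith) hu2
        rwa [Real.log_div (by linarith) (by norm_num)] at h1
      have hloguL : L' / 2 ≤ Real.log u := by linarith
      have hlogupos : 0 < Real.log u := by linarith
      have hbu := hb u (by linarith)
      rw [abs_lt] at hbu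
      have hgap : u - φ₁ u < 2 * (u / Real.log u) := by
        have h2 := hbu.2
        have e : (1 - c) * u / Real.log u
            = u / Real.log u - c * (u / Real.log u) := by ring
        have e1 : 1 * u / Real.log u = u / Real.log u := by ring
        rw [e, e1] at h2
        have hA : 0 ≤ c * (u / Real.log u) :=
          mul_nonneg hc.le (div_nonneg hupos.le hlogupos.le)
        linarith
      have hgap2 : 2 * (u / Real.log u) ≤ 4 * (T + U) / L' := by
        have h0 : 2 * (u / Real.log u) = 2 * u / Real.log u := by ring
        rw [h0, div_le_div_iff₀ hlogupos hL'pos]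
        linarith [mul_nonneg (by linarith : (0:ℝ) ≤ T + U - u) hL'pos.le,
          mul_nonneg (by linarith : (0:ℝ) ≤ 2 * (T + U))
            (by linarith : (0:ℝ) ≤ 2 * Real.log u - L')]
      constructor
      · rw [Function.iterate_succ_apply', ← hudef]
        push_cast
        have : φ₁ u > u - 4 * (T + U) / L' := by
          have h3 : 2 * (u / Real.log u) = 2 * u / Real.log u := by ring
          linarith
        have h4 : 4 * ((m : ℝ) + 1) * (T + U) / L'
            = 4 * (m : ℝ) * (T + U) / L' + 4 * (T + U) / L' := by ring
        linarith
      · rw [Function.iterate_succ_apply', ← hudef]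
        have := hlt u (by linarith)
        linarith
  -- now specialize to j = k
  obtain ⟨hsl, hsu⟩ := key k (hk.trans (Nat.le_succ n))
  set s := φ₁^[k] (T + U) with hsdef
  have hknR : (k : ℝ) ≤ (n : ℝ) + 1 := by
    have : (k : ℝ) ≤ (n : ℝ) := by exact_mod_cast hk
    linarith
  have htL'2TL : (T + U) / L' ≤ 2 * T / L := by
    rw [div_le_div_iff₀ hL'pos hLpos]
    linarith [mul_nonneg (by linarith : (0:ℝ) ≤ 2 * T)
      (by linarith : (0:ℝ) ≤ L' - L),
      mul_nonneg (by linarith : (0:ℝ) ≤ 2 * T - (T + U)) hLpos.le]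
  have hsl2 : T - 8 * ((n : ℝ) + 1) * T / L ≤ s := by
    have h1 : 4 * (k : ℝ) * (T + U) / L' ≤ 4 * ((n : ℝ) + 1) * (T + U) / L' := by
      rw [div_le_div_iff₀ hL'pos hL'pos]
      linarith [mul_nonneg (mul_nonneg
        (by linarith : (0:ℝ) ≤ 4 * ((n : ℝ) + 1) - 4 * (k : ℝ)) htpos.le) hL'pos.le]
    have h2 : 4 * ((n : ℝ) + 1) * ((T + U) / L') ≤ 4 * ((n : ℝ) + 1) * (2 * T / L) := by
      apply mul_le_mul_of_nonneg_left htL'2TL (by positivity)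
    have h3 : 4 * ((n : ℝ) + 1) * (2 * T / L) = 8 * ((n : ℝ) + 1) * T / L := by ring
    have h4 : 4 * ((n : ℝ) + 1) * ((T + U) / L') = 4 * ((n : ℝ) + 1) * (T + U) / L' := by
      ring
    linarith
  have hs2T : s ≤ T + T / L := by linarith
  have hsT2 : T / 2 ≤ s := by
    have h5 : 8 * ((n : ℝ) + 1) * T / L ≤ T / 2 := by
      rw [div_le_div_iff₀ hLpos (by norm_num : (0:ℝ) < 2)]
      have hn0 : (0:ℝ) ≤ (n : ℝ) := Nat.cast_nonneg n
      linarith [mul_nonneg (by linarith : (0:ℝ) ≤ L - 16 * ((n : ℝ) + 1)) hT0.le]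
    linarith
  have hspos : 0 < s := by linarith
  have hsabs : |s - T| ≤ C * T / L := by
    rw [abs_le]
    constructor
    · have : T / L ≤ C * T / L := by
        rw [div_le_div_iff₀ hLpos hLpos]
        have hn0 : (0:ℝ) ≤ (n : ℝ) := Nat.cast_nonneg n
        have hC1 : (0:ℝ) ≤ C - 1 := by rw [hCdef]; linarith
        linarith [mul_nonneg (mul_nonneg hC1 hT0.le) hLpos.le]
      have h6 : 8 * ((n : ℝ) + 1) * T / L ≤ C * T / L := by
        rw [div_le_div_iff₀ hLpos hLpos]
        have hC8 : (0:ℝ) ≤ C - 8 * ((n : ℝ) + 1) := by rw [hCdef]; linarith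
        linarith [mul_nonneg (mul_nonneg hC8 hT0.le) hLpos.le]
      linarith
    · have : T / L ≤ C * T / L := by
        rw [div_le_div_iff₀ hLpos hLpos]
        have hn0 : (0:ℝ) ≤ (n : ℝ) := Nat.cast_nonneg n
        have hC1 : (0:ℝ) ≤ C - 1 := by rw [hCdef]; linarith
        linarith [mul_nonneg (mul_nonneg hC1 hT0.le) hLpos.le]
      linarith
  -- bounds on log s
  have hlogs_low : L - Real.log 2 ≤ Real.log s := by
    have h1 : Real.log (T / 2) ≤ Real.log s := Real.log_le_log (by linarith) hsT2
    rwa [Real.log_div hT0.ne' (by norm_num)] at h1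
  have hlogs_high : Real.log s ≤ L + Real.log 2 := by
    have h1 : Real.log s ≤ Real.log (2 * T) :=
      Real.log_le_log hspos (by linarith [hTLT])
    rwa [Real.log_mul (by norm_num) hT0.ne', add_comm] at h1
  set ls := Real.log s with hlsdef
  have hlsL2 : L / 2 ≤ ls := by linarith
  have hlspos : 0 < ls := by linarith
  have hlsabs : |L - ls| ≤ 1 := by
    rw [abs_le]; constructor <;> linarith
  -- the main ratio estimate
  have hE : |s / ls - T / L| ≤ (2 * C + 2) * T / L ^ 2 := by
    have hid : s / ls - T / L = ((s - T) * L + T * (L - ls)) / (ls * L) := by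
      field_simp
      ring
    rw [hid, abs_div]
    have hnum : |(s - T) * L + T * (L - ls)| ≤ (C + 1) * T := by
      have h1 : |(s - T) * L| ≤ C * T := by
        rw [abs_mul, abs_of_pos hLpos]
        have : |s - T| * L ≤ (C * T / L) * L := by
          apply mul_le_mul_of_nonneg_right hsabs hLpos.le
        rwa [div_mul_cancel₀ _ hLpos.ne'] at this
      have h2 : |T * (L - ls)| ≤ T := by
        rw [abs_mul, abs_of_pos hT0]
        linarith [mul_nonneg hT0.le (by linarith [hlsabs] : (0:ℝ) ≤ 1 - |L - ls|)]
      calc |(s - T) * L + T * (L - ls)| ≤ |(s - T) * L| + |T * (L - ls)| :=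
            abs_add_le _ _
        _ ≤ (C + 1) * T := by linarith
    have hden : |ls * L| = ls * L := abs_of_pos (by positivity)
    rw [hden]
    calc |(s - T) * L + T * (L - ls)| / (ls * L)
        ≤ ((C + 1) * T) / (L / 2 * L) := by
          apply div_le_div₀ (by positivity) hnum (by positivity)
          linarith [mul_nonneg (by linarith : (0:ℝ) ≤ ls - L / 2) hLpos.le]
      _ = (2 * C + 2) * T / L ^ 2 := by
          field_simp
    done
  have hEδ : |s / ls - T / L| ≤ δ₁ * (T / L) := by
    have h1 : 2 * C + 2 ≤ δ₁ * L := by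
      have h0 := (div_le_iff₀ hδ₁pos).mp hKd
      linarith [mul_nonneg (by linarith : (0:ℝ) ≤ L - K) hδ₁pos.le]
    have h2 : (2 * C + 2) * T / L ^ 2 ≤ δ₁ * (T / L) := by
      rw [div_le_iff₀ (by positivity : (0:ℝ) < L ^ 2)]
      have h3 : δ₁ * (T / L) * L ^ 2 = (δ₁ * L) * T := by
        field_simp
      rw [h3]
      linarith [mul_nonneg (by linarith : (0:ℝ) ≤ δ₁ * L - (2 * C + 2)) hT0.le]
    linarith
  have hsls2 : s / ls ≤ 2 * (T / L) := by
    have h1 := (abs_le.mp hEδ).2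
    have h2 : δ₁ * (T / L) ≤ T / L := by
      linarith [mul_nonneg (by linarith : (0:ℝ) ≤ 1 - δ₁)
        (div_nonneg hT0.le hLpos.le)]
    linarith
  have hslspos : 0 ≤ s / ls := by positivity
  -- apply the asymptotic at s
  have has := ha s (by linarith)
  rw [← hlsdef] at has
  -- apply the uniform hypothesis
  have hUck := hUc T hT1c U hU1 hU2 k (hk.trans (Nat.le_succ n))
  rw [← hsdef] at hUck
  -- final assembly
  rw [Function.iterate_succ_apply', ← hsdef]
  have hid2 : φ₁^[k] T - φ₁ s - (1 - c) * T / L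
      = -(s - φ₁^[k] T - U) + (s - φ₁ s - (1 - c) * s / ls)
        + (1 - c) * (s / ls - T / L) + (-U) := by
    field_simp
    ring
  rw [hid2]
  have e1 : |-(s - φ₁^[k] T - U)| < δ₁ * (T / L) := by
    rw [abs_neg]
    have : δ₁ * U ≤ δ₁ * (T / L) := mul_le_mul_of_nonneg_left hUTL hδ₁pos.le
    linarith
  have e2 : |s - φ₁ s - (1 - c) * s / ls| < 2 * δ₁ * (T / L) := by
    have h1 : δ₁ * s / ls = δ₁ * (s / ls) := by ring
    have h2 : δ₁ * (s / ls) ≤ δ₁ * (2 * (T / L)) :=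
      mul_le_mul_of_nonneg_left hsls2 hδ₁pos.le
    calc |s - φ₁ s - (1 - c) * s / ls| < δ₁ * s / ls := has
      _ ≤ 2 * δ₁ * (T / L) := by rw [h1]; linarith
  have e3 : |(1 - c) * (s / ls - T / L)| ≤ δ₁ * (T / L) := by
    rw [abs_mul, abs_of_pos (by linarith : (0:ℝ) < 1 - c)]
    calc (1 - c) * |s / ls - T / L| ≤ 1 * |s / ls - T / L| := by
          apply mul_le_mul_of_nonneg_right (by linarith) (abs_nonneg _)
      _ = |s / ls - T / L| := one_mul _
      _ ≤ δ₁ * (T / L) := hEδ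
  have e4 : |(-U : ℝ)| ≤ δ₁ * (T / L) := by
    rw [abs_neg, abs_of_pos hUpos]
    have h1 : (1 : ℝ) ≤ δ₁ * L := by
      have h0 := (div_le_iff₀ hδ₁pos).mp hKd'
      linarith [mul_nonneg (by linarith : (0:ℝ) ≤ L - K) hδ₁pos.le]
    have h2 : T / L ^ 2 ≤ δ₁ * (T / L) := by
      rw [div_le_iff₀ (by positivity : (0:ℝ) < L ^ 2)]
      have h3 : δ₁ * (T / L) * L ^ 2 = (δ₁ * L) * T := by
        field_simp
      rw [h3]
      linarith [mul_nonneg (by linarith : (0:ℝ) ≤ δ₁ * L - 1) hT0.le]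
    linarith
  have tri : |-(s - φ₁^[k] T - U) + (s - φ₁ s - (1 - c) * s / ls)
      + (1 - c) * (s / ls - T / L) + (-U)|
      ≤ |-(s - φ₁^[k] T - U)| + |s - φ₁ s - (1 - c) * s / ls|
        + |(1 - c) * (s / ls - T / L)| + |(-U : ℝ)| := by
    calc |-(s - φ₁^[k] T - U) + (s - φ₁ s - (1 - c) * s / ls)
        + (1 - c) * (s / ls - T / L) + (-U)|
        ≤ |-(s - φ₁^[k] T - U) + (s - φ₁ s - (1 - c) * s / ls)
          + (1 - c) * (s / ls - T / L)| + |(-U : ℝ)| := abs_add_le _ _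
      _ ≤ (|-(s - φ₁^[k] T - U) + (s - φ₁ s - (1 - c) * s / ls)|
          + |(1 - c) * (s / ls - T / L)|) + |(-U : ℝ)| := by
          gcongr
          exact abs_add_le _ _
      _ ≤ ((|-(s - φ₁^[k] T - U)| + |s - φ₁ s - (1 - c) * s / ls|)
          + |(1 - c) * (s / ls - T / L)|) + |(-U : ℝ)| := by
          gcongr
          exact abs_add_le _ _
      _ = _ := by ring
  have hfinal : 5 * δ₁ * (T / L) ≤ δ * (T / L) := by
    linarith [mul_nonneg (by linarith : (0:ℝ) ≤ δ - 5 * δ₁)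
      (div_nonneg hT0.le hLpos.le)]
  calc |-(s - φ₁^[k] T - U) + (s - φ₁ s - (1 - c) * s / ls)
      + (1 - c) * (s / ls - T / L) + (-U)| ≤ _ := tri
    _ < δ₁ * (T / L) + 2 * δ₁ * (T / L) + δ₁ * (T / L) + δ₁ * (T / L) := by
        linarith
    _ = 5 * δ₁ * (T / L) := by ring
    _ ≤ δ * (T / L) := hfinal
end
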